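/- Let (R, 𝔪) be a local commutative artinian principal ideal ring whose residue field R/𝔪 has characteristic different from 2, M a finitely generated R-module, and ⟨,⟩ : M × M → R a symmetric R-bilinear form. Let x, y ∈ M and i, j, k be such that R⟨x, x⟩ = 𝔪^i, R⟨x, y⟩ = 𝔪^j and R⟨y, y⟩ = 𝔪^k, with i + k > 2j and i ≥ j. Then there exists c ∈ 𝔪^{i-j} such that the element z = x + c y satisfies ⟨z, z⟩ = 0 and R⟨y, z⟩ = 𝔪^j. -/
import Mathlib


/-- Let `(R, 𝔪)` be a local commutative artinian principal ideal ring whose residue field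
`R/𝔪` has characteristic different from `2`, `M` a finitely generated `R`-module, and
`⟨,⟩ : M × M → R` a symmetric bilinear form.  Let `x, y ∈ M` and `i, j, k` be such that
`R⟨x,x⟩ = 𝔪^i`, `R⟨x,y⟩ = 𝔪^j`, `R⟨y,y⟩ = 𝔪^k`, with `i + k > 2j` and `i ≥ j`.  Then there
exists `c ∈ 𝔪^(i-j)` such that `z = x + cy` satisfies `⟨z,z⟩ = 0` and `R⟨y,z⟩ = 𝔪^j`. -/
theorem hensel_isotropic (R M : Type*) [CommRing R] [IsLocalRing R]
    [IsArtinianRing R] [IsPrincipalIdealRing R] [AddCommGroup M] [Module R M]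
    [Module.Finite R M]
    (hchar : ringChar (R ⧸ IsLocalRing.maximalIdeal R) ≠ 2)
    (B : M →ₗ[R] M →ₗ[R] R) (hB : ∀ x y, B x y = B y x)
    (x y : M) (i j k : ℕ)
    (hxx : Ideal.span {B x x} = IsLocalRing.maximalIdeal R ^ i)
    (hxy : Ideal.span {B x y} = IsLocalRing.maximalIdeal R ^ j)
    (hyy : Ideal.span {B y y} = IsLocalRing.maximalIdeal R ^ k)
    (hik : i + k > 2 * j) (hij : i ≥ j) :
    ∃ c ∈ IsLocalRing.maximalIdeal R ^ (i - j),
      B (x + c • y) (x + c • y) = 0 ∧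
        Ideal.span {B y (x + c • y)} = IsLocalRing.maximalIdeal R ^ j := by
  set m := IsLocalRing.maximalIdeal R with hm
  -- 2 is a unit in R
  have h2 : IsUnit (2 : R) := by
    by_contra h
    have h2m : (2 : R) ∈ m := (IsLocalRing.mem_maximalIdeal _).mpr h
    have h2q : ((2 : ℕ) : R ⧸ m) = 0 := by
      have : ((2 : R) : R ⧸ m) = 0 := Ideal.Quotient.eq_zero_iff_mem.mpr h2m
      push_cast
      exact_mod_cast this
    have hdvd : ringChar (R ⧸ m) ∣ 2 := ringChar.dvd h2q
    have hne1 : ringChar (R ⧸ m) ≠ 1 := by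
      intro h1
      have : ((ringChar (R ⧸ m) : ℕ) : R ⧸ m) = 0 := ringChar.spec _ _ |>.mpr dvd_rfl
      rw [h1] at this
      simp at this
    rcases (Nat.dvd_prime Nat.prime_two).mp hdvd with h1 | h2
    · exact hne1 h1
    · exact hchar h2
  -- the maximal ideal is nilpotent
  obtain ⟨N, hN⟩ : ∃ N, m ^ N = ⊥ := by
    obtain ⟨N, hN⟩ := IsArtinianRing.isNilpotent_jacobson_bot (R := R)
    refine ⟨N, ?_⟩
    rwa [IsLocalRing.jacobson_eq_maximalIdeal ⊥ bot_ne_top] at hN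
  -- units of the form 1 + m'
  have one_add_unit : ∀ m' ∈ m, IsUnit (1 + m') := by
    intro m' hm'
    have := IsLocalRing.isUnit_one_sub_self_of_mem_nonunits (-m')
      ((IsLocalRing.mem_maximalIdeal _).mp (neg_mem hm'))
    simpa using this
  -- the span lemma: for c ∈ m^(i-j), span {B x y + c * B y y} = m ^ j
  have span_lemma : ∀ c ∈ m ^ (i - j), Ideal.span {B x y + c * B y y} = m ^ j := by
    intro c hc
    have hd : B y y ∈ m ^ k := hyy ▸ Ideal.mem_span_singleton_self _
    have hcd : c * B y y ∈ m ^ (j + 1) := by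
      have := Ideal.mul_mem_mul hc hd
      rw [← pow_add] at this
      exact Ideal.pow_le_pow_right (by omega) this
    have hcd' : c * B y y ∈ Ideal.span {B x y} * m := by
      rw [hxy, ← pow_succ]
      exact hcd
    obtain ⟨m', hm', hm'eq⟩ := Ideal.mem_span_singleton_mul.mp hcd'
    have heq : B x y + c * B y y = B x y * (1 + m') := by
      rw [← hm'eq]; ring
    rw [heq, Ideal.span_singleton_mul_right_unit (one_add_unit m' hm'), hxy]
  -- expansion of the quadratic form
  have expand : ∀ u : R, B (x + u • y) (x + u • y)
      = B x x + (2 * u) * B x y + u ^ 2 * B y y := by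
    intro u
    simp only [map_add, map_smul, LinearMap.add_apply, LinearMap.smul_apply, smul_eq_mul,
      hB y x]
    ring
  -- first-order expansion of the form against y
  have expandy : ∀ u : R, B (x + u • y) y = B x y + u * B y y := by
    intro u
    simp [map_add, map_smul, smul_eq_mul]
  -- main induction
  have key : ∀ s : ℕ, ∃ c ∈ m ^ (i - j), B (x + c • y) (x + c • y) ∈ m ^ (i + s) := by
    intro s
    induction s with
    | zero =>
      refine ⟨0, zero_mem _, ?_⟩
      simpa using hxx ▸ Ideal.mem_span_singleton_self (B x x)
    | succ s ih =>
      obtain ⟨c, hc, hfc⟩ := ih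
      have hspan : Ideal.span {B x y + c * B y y} = m ^ j := span_lemma c hc
      -- f(c) = t * (B x y + c * B y y) for some t ∈ m^(i-j+s)
      have hfc' : B (x + c • y) (x + c • y) ∈ m ^ (i - j + s) * Ideal.span {B x y + c * B y y} := by
        rw [hspan, ← pow_add]
        have : i - j + s + j = i + s := by omega
        rw [this]
        exact hfc
      obtain ⟨t, ht, hteq⟩ := Ideal.mem_mul_span_singleton.mp hfc'
      set δ : R := -(↑h2.unit⁻¹ * t) with hδ
      have h2δ : (2 : R) * δ = -t := by
        have h21 : (2 : R) * ↑h2.unit⁻¹ = 1 := h2.mul_val_inv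
        rw [hδ]
        ring_nf
        linear_combination (-t) * h21
      have hδmem : δ ∈ m ^ (i - j + s) := by
        rw [hδ]
        exact neg_mem (Ideal.mul_mem_left _ _ ht)
      refine ⟨c + δ, add_mem hc (Ideal.pow_le_pow_right (by omega) hδmem), ?_⟩
      have keyeq : B (x + (c + δ) • y) (x + (c + δ) • y) = δ ^ 2 * B y y := by
        have e1 := expand (c + δ)
        have e2 := expand c
        have e3 : B x x + 2 * c * B x y + c ^ 2 * B y y = t * (B x y + c * B y y) := by
          rw [← e2, hteq]
        rw [e1]
        linear_combination e3 + (B x y + c * B y y) * h2δ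
      rw [keyeq]
      have hd : B y y ∈ m ^ k := hyy ▸ Ideal.mem_span_singleton_self _
      have hδ2 : δ ^ 2 ∈ (m ^ (i - j + s)) ^ 2 := Ideal.pow_mem_pow hδmem 2
      rw [← pow_mul] at hδ2
      have := Ideal.mul_mem_mul hδ2 hd
      rw [← pow_add] at this
      exact Ideal.pow_le_pow_right (by omega) this
  -- conclusion
  obtain ⟨c, hc, hfc⟩ := key N
  refine ⟨c, hc, ?_, ?_⟩
  · have : m ^ (i + N) ≤ m ^ N := Ideal.pow_le_pow_right (by omega)
    have := this hfc
    rw [hN] at this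
    simpa using this
  · rw [hB y (x + c • y), expandy c]
    exact span_lemma c hc
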